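/- Let R be a ring, 'S := 'S_l(R) the largest left denominator set of R contained in 'C_R, and 'a := ass_R('S). Then: (1) 'S = 'C_R ∩ ('S + 'a); (2) 'a is the largest element of the poset 'Ass_l(R) := {ass_R(S) | S is a left denominator set of R with S ⊆ 'C_R} ordered by inclusion; (3) 'S is a maximal element (with respect to inclusion) of the set {S | S is a left denominator set of R with S = 'C_R ∩ (S + ass_R(S))}; (4) 'S + 'a is a left denominator set of R with ass_R('S + 'a) = 'a; (5) 'Q_l(R) := 'S⁻¹R ≅ ('S + 'a)⁻¹R. -/

import Mathlib

universe u

namespace Bavula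

/-- The set of left regular elements of `R`. -/
def lReg (R : Type u) [Ring R] : Set R := {c : R | ∀ x : R, x * c = 0 → x = 0}

/-- The set of right regular elements of `R`. -/
def rReg (R : Type u) [Ring R] : Set R := {c : R | ∀ x : R, c * x = 0 → x = 0}

/-- The set of regular elements of `R`. -/
def reg (R : Type u) [Ring R] : Set R := lReg R ∩ rReg R

/-- `S` is a multiplicative set of `R`. -/
def IsMulSet {R : Type u} [Ring R] (S : Set R) : Prop :=
  (1 : R) ∈ S ∧ (∀ a ∈ S, ∀ b ∈ S, a * b ∈ S) ∧ (0 : R) ∉ S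

/-- `S` is a left Ore set of `R`. -/
def IsLeftOre {R : Type u} [Ring R] (S : Set R) : Prop :=
  IsMulSet S ∧ ∀ s ∈ S, ∀ r : R, ∃ s' ∈ S, ∃ r' : R, s' * r = r' * s

/-- `S` is a left denominator set of `R`. -/
def IsLeftDenom {R : Type u} [Ring R] (S : Set R) : Prop :=
  IsLeftOre S ∧ ∀ r : R, ∀ s ∈ S, r * s = 0 → ∃ t ∈ S, t * r = 0

/-- `S` is a right Ore set of `R`. -/
def IsRightOre {R : Type u} [Ring R] (S : Set R) : Prop :=
  IsMulSet S ∧ ∀ s ∈ S, ∀ r : R, ∃ s' ∈ S, ∃ r' : R, r * s' = s * r'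

/-- `S` is a right denominator set of `R`. -/
def IsRightDenom {R : Type u} [Ring R] (S : Set R) : Prop :=
  IsRightOre S ∧ ∀ r : R, ∀ s ∈ S, s * r = 0 → ∃ t ∈ S, r * t = 0

/-- `ass_R(S) = {r ∈ R | s r = 0 for some s ∈ S}`. -/
def ass {R : Type u} [Ring R] (S : Set R) : Set R := {r : R | ∃ s ∈ S, s * r = 0}

/-- `{r ∈ R | r s = 0 for some s ∈ S}` (the right-sided analogue of `ass`). -/
def rass {R : Type u} [Ring R] (S : Set R) : Set R := {r : R | ∃ s ∈ S, r * s = 0}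

/-- `S` is a (left) dense subset of `T`. -/
def DenseIn {R : Type u} [Ring R] (S T : Set R) : Prop := ∀ t ∈ T, ∃ r : R, r * t ∈ S

/-- `f : R →+* Q` realizes `Q` as the left localization `S⁻¹R` of `R` at `S`:
elements of `S` become units, every element of `Q` is a left fraction `(f s)⁻¹ * (f r)`,
and the kernel of `f` is `ass S`. -/
def IsLeftLoc {R : Type u} [Ring R] (S : Set R) {Q : Type u} [Ring Q] (f : R →+* Q) : Prop :=
  (∀ s ∈ S, IsUnit (f s)) ∧
  (∀ q : Q, ∃ s ∈ S, ∃ r : R, f s * q = f r) ∧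
  (∀ r : R, f r = 0 ↔ r ∈ ass S)

/-- `π : R →+* Q` realizes `Q` as the quotient of `R` by the set `a`
(in particular, `a` is then a two-sided ideal of `R`). -/
def IsQuotBy {R : Type u} [Ring R] (a : Set R) {Q : Type u} [Ring Q] (π : R →+* Q) : Prop :=
  Function.Surjective π ∧ ∀ r : R, π r = 0 ↔ r ∈ a

/-- A semiprime ring (no nonzero nilpotent ideals), elementwise: `x R x = 0 → x = 0`. -/
def SemiprimeRing (A : Type u) [Ring A] : Prop := ∀ x : A, (∀ r : A, x * r * x = 0) → x = 0

/-- `a` is a two-sided ideal of `R`, given as a set. -/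
def IsIdealSet {R : Type u} [Ring R] (a : Set R) : Prop :=
  (0 : R) ∈ a ∧ (∀ x ∈ a, ∀ y ∈ a, x + y ∈ a) ∧ ∀ r : R, ∀ x ∈ a, r * x ∈ a ∧ x * r ∈ a

/-- `a` is a semiprime (two-sided) ideal of `R`, i.e. `R/a` is a semiprime ring. -/
def IsSemiprimeIdealSet {R : Type u} [Ring R] (a : Set R) : Prop :=
  IsIdealSet a ∧ ∀ x : R, (∀ r : R, x * r * x ∈ a) → x ∈ a

/-- `a` is a prime (two-sided) ideal of `R`, i.e. `R/a` is a prime ring. -/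
def IsPrimeIdealSet {R : Type u} [Ring R] (a : Set R) : Prop :=
  IsIdealSet a ∧ a ≠ Set.univ ∧ ∀ x y : R, (∀ r : R, x * r * y ∈ a) → x ∈ a ∨ y ∈ a

/-- The prime radical of `A`: the intersection of all prime ideals of `A`. -/
def primeRadical (A : Type u) [Ring A] : Set A :=
  {x : A | ∀ p : Set A, IsPrimeIdealSet p → x ∈ p}

/-- The set of prime ideals of `R` minimal over `a`. -/
def minPrimesOver {R : Type u} [Ring R] (a : Set R) : Set (Set R) :=
  {p : Set R | IsPrimeIdealSet p ∧ a ⊆ p ∧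
    ∀ q : Set R, IsPrimeIdealSet q → a ⊆ q → q ⊆ p → q = p}

/-- A simple ring: nontrivial, with no two-sided ideals other than `0` and `A`. -/
def SimpleRing (A : Type u) [Ring A] : Prop :=
  (0 : A) ≠ 1 ∧ ∀ a : Set A, IsIdealSet a → a = {0} ∨ a = Set.univ

/-- A simple (left) Artinian ring. -/
def SimpleArtinianRing (A : Type u) [Ring A] : Prop := SimpleRing A ∧ IsArtinianRing A

/-- `I` is an essential left ideal of `R`. -/
def EssIdeal {R : Type u} [Ring R] (I : Submodule R R) : Prop :=
  ∀ J : Submodule R R, J ≠ ⊥ → I ⊓ J ≠ ⊥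

/-- `N` is an essential submodule of the left ideal `M`. -/
def EssIn {R : Type u} [Ring R] (N M : Submodule R R) : Prop :=
  N ≤ M ∧ ∀ W : Submodule R R, W ≤ M → W ≠ ⊥ → N ⊓ W ≠ ⊥

/-- `U` is a uniform left ideal of `R`. -/
def UniformIdeal {R : Type u} [Ring R] (U : Submodule R R) : Prop :=
  U ≠ ⊥ ∧ ∀ V W : Submodule R R, V ≤ U → W ≤ U → V ≠ ⊥ → W ≠ ⊥ → V ⊓ W ≠ ⊥

/-- `udim(_A A) < ∞`: there is a finite direct sum of uniform left ideals of `A`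
which is an essential left ideal of `A`. -/
def FinUdim (A : Type u) [Ring A] : Prop :=
  ∃ (n : ℕ) (U : Fin (n + 1) → Submodule A A),
    (∀ i, UniformIdeal (U i)) ∧
    (∀ i, U i ⊓ (⨆ j, ⨆ (_ : j ≠ i), U j) = ⊥) ∧
    EssIdeal (⨆ i, U i)

/-- `'C_V = {v ∈ V | right multiplication by v is injective on V}` for a left ideal `V`. -/
def lRegIn {R : Type u} [Ring R] (V : Submodule R R) : Set R :=
  {v : R | v ∈ V ∧ ∀ x ∈ V, x * v = 0 → x = 0}

/-- The family `P` of subsets of `R` satisfies the ascending chain condition. -/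
def AccOnSets {R : Type u} [Ring R] (P : Set (Set R)) : Prop :=
  ∀ f : ℕ → Set R, (∀ n, f n ∈ P) → (∀ n, f n ⊆ f (n + 1)) →
    ∃ N : ℕ, ∀ n : ℕ, N ≤ n → f n = f N

/-- The left annihilator of `X` in `R`. -/
def lAnn {R : Type u} [Ring R] (X : Set R) : Set R := {r : R | ∀ x ∈ X, r * x = 0}

/-- The right annihilator of `X` in `R`. -/
def rAnn {R : Type u} [Ring R] (X : Set R) : Set R := {r : R | ∀ x ∈ X, x * r = 0}

/-- A left Goldie ring: a.c.c. on left annihilators and finite left uniform dimension. -/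
def LeftGoldie (A : Type u) [Ring A] : Prop :=
  AccOnSets {B : Set A | ∃ X : Set A, B = lAnn X} ∧ FinUdim A

/-- The set of maximal left denominator sets of `A`. -/
def maxLeftDenom (A : Type u) [Ring A] : Set (Set A) :=
  {S : Set A | IsLeftDenom S ∧ ∀ T : Set A, IsLeftDenom T → S ⊆ T → S = T}

/-- `S_p = {c ∈ R | c + p ∈ C_{R/p}}`: the elements regular modulo `p`. -/
def regMod {R : Type u} [Ring R] (p : Set R) : Set R :=
  {c : R | (∀ x : R, x * c ∈ p → x ∈ p) ∧ ∀ x : R, c * x ∈ p → x ∈ p}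

/-- `I` is a right ideal of `R`, given as a set. -/
def IsRightIdealSet {R : Type u} [Ring R] (I : Set R) : Prop :=
  (0 : R) ∈ I ∧ (∀ x ∈ I, ∀ y ∈ I, x + y ∈ I) ∧ ∀ x ∈ I, ∀ r : R, x * r ∈ I

/-- The left singular ideal `ζ_l(R, a)` of `R` over `a`. -/
def leftSingularOver {R : Type u} [Ring R] (a : Set R) : Set R :=
  {r : R | ∃ I : Submodule R R, EssIdeal I ∧ a ⊆ I ∧ ∀ x ∈ I, x * r = 0}

/-!
If `x ∈ ass S` is killed by `s₁ ∈ S`, then `s₁ (s + x) = s₁ s ∈ S`: every element of `S + ass S`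
is left-multiplied into `S`. This makes `S + ass S` a left denominator set with the same
`ass`, and each of its left fractions `(s + x)⁻¹ r` equal to `s⁻¹ r`, so both localizations
agree. Intersecting with `'C_R` gives a left denominator set inside `'C_R` containing `'S`,
which by maximality is `'S` itself.
-/

open scoped Pointwise

section Denominators

variable {R : Type u} [Ring R] {S T : Set R}

theorem mul_mem_lReg {a b : R} (ha : a ∈ lReg R) (hb : b ∈ lReg R) : a * b ∈ lReg R :=
  fun x hx => ha x (hb _ (by rwa [mul_assoc]))

theorem ass_mono (h : S ⊆ T) : ass S ⊆ ass T := fun _ ⟨s, hs, hsx⟩ => ⟨s, h hs, hsx⟩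

theorem ass_subset_of_denseIn (h : DenseIn S T) : ass T ⊆ ass S := by
  rintro x ⟨t, ht, htx⟩
  obtain ⟨r, hrt⟩ := h t ht
  exact ⟨r * t, hrt, by rw [mul_assoc, htx, mul_zero]⟩

theorem zero_mem_ass (h1 : (1 : R) ∈ S) : (0 : R) ∈ ass S := ⟨1, h1, mul_zero 1⟩

theorem mul_mem_ass_right {x : R} (hx : x ∈ ass S) (r : R) : x * r ∈ ass S := by
  obtain ⟨s, hs, hsx⟩ := hx
  exact ⟨s, hs, by rw [← mul_assoc, hsx, zero_mul]⟩

theorem neg_mem_ass {x : R} (hx : x ∈ ass S) : -x ∈ ass S := by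
  obtain ⟨s, hs, hsx⟩ := hx
  exact ⟨s, hs, by rw [mul_neg, hsx, neg_zero]⟩

theorem IsLeftOre.mul_mem_ass_left (hS : IsLeftOre S) (r : R) {x : R} (hx : x ∈ ass S) :
    r * x ∈ ass S := by
  obtain ⟨s, hs, hsx⟩ := hx
  obtain ⟨s', hs', r', h⟩ := hS.2 s hs r
  exact ⟨s', hs', by rw [← mul_assoc, h, mul_assoc, hsx, mul_zero]⟩

theorem IsLeftOre.add_mem_ass (hS : IsLeftOre S) {x y : R} (hx : x ∈ ass S)
    (hy : y ∈ ass S) : x + y ∈ ass S := by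
  obtain ⟨s₁, hs₁, h₁⟩ := hx
  obtain ⟨s₂, hs₂, h₂⟩ := hy
  obtain ⟨s', hs', r', h⟩ := hS.2 s₂ hs₂ s₁
  refine ⟨s' * s₁, hS.1.2.1 _ hs' _ hs₁, ?_⟩
  rw [mul_add, mul_assoc, h₁, mul_zero, h, mul_assoc, h₂, mul_zero, add_zero]

theorem subset_add_ass (h1 : (1 : R) ∈ S) : S ⊆ S + ass S := fun s hs => by
  simpa using Set.add_mem_add hs (zero_mem_ass h1)

theorem subset_lReg_inter_add_ass (h1 : (1 : R) ∈ S) (hsub : S ⊆ lReg R) :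
    S ⊆ lReg R ∩ (S + ass S) :=
  fun _ hs => ⟨hsub hs, subset_add_ass h1 hs⟩

theorem IsMulSet.denseIn_add_ass (hS : IsMulSet S) : DenseIn S (S + ass S) := by
  rintro _ ⟨s, hs, x, ⟨s₁, hs₁, hx⟩, rfl⟩
  exact ⟨s₁, by rw [mul_add, hx, add_zero]; exact hS.2.1 _ hs₁ _ hs⟩

theorem IsMulSet.ass_add_ass (hS : IsMulSet S) : ass (S + ass S) = ass S :=
  (ass_subset_of_denseIn hS.denseIn_add_ass).antisymm (ass_mono (subset_add_ass hS.1))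

theorem IsMulSet.lReg_inter (hT : IsMulSet T) : IsMulSet (lReg R ∩ T) :=
  ⟨⟨fun x hx => by rwa [mul_one] at hx, hT.1⟩,
    fun _ ha _ hb => ⟨mul_mem_lReg ha.1 hb.1, hT.2.1 _ ha.2 _ hb.2⟩,
    fun h => hT.2.2 h.2⟩

theorem IsLeftOre.isMulSet_add_ass (hS : IsLeftOre S) : IsMulSet (S + ass S) := by
  refine ⟨subset_add_ass hS.1.1 hS.1.1, ?_, ?_⟩
  · rintro _ ⟨s₁, hs₁, x₁, hx₁, rfl⟩ _ ⟨s₂, hs₂, x₂, hx₂, rfl⟩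
    rw [show (s₁ + x₁) * (s₂ + x₂) = s₁ * s₂ + (s₁ * x₂ + x₁ * (s₂ + x₂)) by noncomm_ring]
    exact Set.add_mem_add (hS.1.2.1 _ hs₁ _ hs₂)
      (hS.add_mem_ass (hS.mul_mem_ass_left _ hx₂) (mul_mem_ass_right hx₁ _))
  · rintro ⟨s, hs, x, ⟨t, ht, htx⟩, hsx⟩
    have hts : t * s = 0 := by
      rw [eq_neg_of_add_eq_zero_right hsx, mul_neg, neg_eq_zero] at htx
      exact htx
    exact hS.1.2.2 (hts ▸ hS.1.2.1 _ ht _ hs)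

theorem IsLeftOre.of_denseIn (hS : IsLeftOre S) (hT : IsMulSet T) (hST : S ⊆ T)
    (hd : DenseIn S T) : IsLeftOre T := by
  refine ⟨hT, fun t ht r => ?_⟩
  obtain ⟨a, hat⟩ := hd t ht
  obtain ⟨s', hs', r', h⟩ := hS.2 _ hat r
  exact ⟨s', hST hs', r' * a, by rw [h, mul_assoc]⟩

theorem IsLeftOre.isLeftDenom_of_subset_lReg (hT : IsLeftOre T) (h : T ⊆ lReg R) :
    IsLeftDenom T :=
  ⟨hT, fun r t ht hrt => ⟨1, hT.1.1, by rw [h ht r hrt, mul_zero]⟩⟩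

theorem IsLeftDenom.add_ass (hS : IsLeftDenom S) : IsLeftDenom (S + ass S) := by
  refine ⟨hS.1.of_denseIn hS.1.isMulSet_add_ass (subset_add_ass hS.1.1.1) hS.1.1.denseIn_add_ass, ?_⟩
  rintro r _ ⟨s, hs, x, hx, rfl⟩ hr
  have hrs : r * s ∈ ass S := by
    rw [show r * s = -(r * x) by rw [← add_eq_zero_iff_eq_neg, ← mul_add, hr]]
    exact neg_mem_ass (hS.1.mul_mem_ass_left r hx)
  obtain ⟨s₂, hs₂, h₂⟩ := hrs
  obtain ⟨t, ht, htr⟩ := hS.2 (s₂ * r) s hs (by rw [mul_assoc, h₂])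
  exact ⟨t * s₂, subset_add_ass hS.1.1.1 (hS.1.1.2.1 _ ht _ hs₂), by rw [mul_assoc, htr]⟩

theorem IsLeftDenom.lReg_inter_add_ass (hS : IsLeftDenom S) (hsub : S ⊆ lReg R) :
    IsLeftDenom (lReg R ∩ (S + ass S)) :=
  IsLeftOre.isLeftDenom_of_subset_lReg
    (hS.1.of_denseIn hS.1.isMulSet_add_ass.lReg_inter (subset_lReg_inter_add_ass hS.1.1.1 hsub)
      fun t ht => hS.1.1.denseIn_add_ass t ht.2)
    Set.inter_subset_left

end Denominators

section Localization

open OreLocalization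

variable {R : Type u} [Ring R] {S : Set R}

def IsMulSet.toSubmonoid (hS : IsMulSet S) : Submonoid R where
  carrier := S
  one_mem' := hS.1
  mul_mem' ha hb := hS.2.1 _ ha _ hb

theorem IsMulSet.mem_toSubmonoid (hS : IsMulSet S) {x : R} : x ∈ hS.toSubmonoid ↔ x ∈ S :=
  Iff.rfl

theorem IsLeftDenom.nonempty_oreSet (hS : IsLeftDenom S) :
    Nonempty (OreSet hS.1.1.toSubmonoid) := by
  refine nonempty_oreSet_iff.mpr ⟨?_, ?_⟩
  · rintro r₁ r₂ ⟨s, hs⟩ h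
    obtain ⟨t, ht, htr⟩ := hS.2 (r₁ - r₂) s hs (by rw [sub_mul, h, sub_self])
    exact ⟨⟨t, ht⟩, sub_eq_zero.mp (by rw [← mul_sub]; exact htr)⟩
  · rintro r ⟨s, hs⟩
    obtain ⟨s', hs', r', h⟩ := hS.1.2 s hs r
    exact ⟨r', ⟨s', hs'⟩, h⟩

theorem IsLeftLoc.nonempty_ringEquiv_oreLocalization (hS : IsMulSet S)
    [OreSet hS.toSubmonoid] {Q : Type u} [Ring Q] {f : R →+* Q} (hf : IsLeftLoc S f) :
    Nonempty (OreLocalization hS.toSubmonoid R ≃+* Q) := by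
  let fS := IsUnit.liftRight ((f : R →* Q).comp hS.toSubmonoid.subtype) fun s => hf.1 s s.2
  let g := universalHom f fS fun _ => rfl
  have hinj : Function.Injective g := by
    refine (injective_iff_map_eq_zero g).mpr fun x hx => ?_
    induction x using OreLocalization.ind with
    | _ r s =>
      have hfr : f r = 0 := by
        rwa [show g (r /ₒ s) = _ from universalHom_apply _ _ _, Units.mul_right_eq_zero] at hx
      obtain ⟨t, ht, htr⟩ := (hf.2.2 r).mp hfr
      rw [OreLocalization.expand' r s ⟨t, hS.mem_toSubmonoid.mpr ht⟩]
      simp [Submonoid.smul_def, htr]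
  have hsurj : Function.Surjective g := by
    intro q
    obtain ⟨s, hs, r, hq⟩ := hf.2.1 q
    let s' : hS.toSubmonoid := ⟨s, hS.mem_toSubmonoid.mpr hs⟩
    refine ⟨r /ₒ s', ?_⟩
    rw [show g (r /ₒ s') = _ from universalHom_apply _ _ _, ← hq]
    exact Units.inv_mul_cancel_left (fS s') q
  exact ⟨RingEquiv.ofBijective g ⟨hinj, hsurj⟩⟩

theorem IsLeftLoc.nonempty_ringEquiv (hS : IsLeftDenom S)
    {Q₁ : Type u} [Ring Q₁] {f₁ : R →+* Q₁} (h₁ : IsLeftLoc S f₁)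
    {Q₂ : Type u} [Ring Q₂] {f₂ : R →+* Q₂} (h₂ : IsLeftLoc S f₂) :
    Nonempty (Q₁ ≃+* Q₂) := by
  obtain ⟨_⟩ := hS.nonempty_oreSet
  obtain ⟨e₁⟩ := h₁.nonempty_ringEquiv_oreLocalization hS.1.1
  obtain ⟨e₂⟩ := h₂.nonempty_ringEquiv_oreLocalization hS.1.1
  exact ⟨e₁.symm.trans e₂⟩

theorem IsLeftLoc.of_add_ass (hS : IsMulSet S) {Q : Type u} [Ring Q] {f : R →+* Q}
    (hf : IsLeftLoc (S + ass S) f) : IsLeftLoc S f := by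
  have hker : ∀ r, f r = 0 ↔ r ∈ ass S := fun r => by rw [hf.2.2 r, hS.ass_add_ass]
  refine ⟨fun s hs => hf.1 s (subset_add_ass hS.1 hs), fun q => ?_, hker⟩
  obtain ⟨_, ⟨s, hs, x, hx, rfl⟩, r, hq⟩ := hf.2.1 q
  refine ⟨s, hs, r, ?_⟩
  rwa [map_add, (hker x).mpr hx, add_zero] at hq

end Localization

open scoped Pointwise in
/-- Theorem 9Mar15: properties of `'S = 'S_l(R)` (the largest left denominator set
contained in `'C_R`) and of `'a = ass_R('S)`. -/
theorem largestLeftRegularDenominator_properties {R : Type u} [Ring R]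
    (S : Set R) (hden : IsLeftDenom S) (hsub : S ⊆ lReg R)
    (hmax : ∀ T : Set R, IsLeftDenom T → T ⊆ lReg R → T ⊆ S) :
    -- (1)
    S = lReg R ∩ (S + ass S) ∧
    -- (2) 'a is the largest element of 'Ass_l(R)
    (ass S ∈ {A : Set R | ∃ T : Set R, IsLeftDenom T ∧ T ⊆ lReg R ∧ ass T = A} ∧
      ∀ T : Set R, IsLeftDenom T → T ⊆ lReg R → ass T ⊆ ass S) ∧
    -- (3) 'S is a maximal element of {T | T ∈ Den_l(R), T = 'C_R ∩ (T + ass T)}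
    ((IsLeftDenom S ∧ S = lReg R ∩ (S + ass S)) ∧
      ∀ T : Set R, IsLeftDenom T → T = lReg R ∩ (T + ass T) → S ⊆ T → T = S) ∧
    -- (4)
    (IsLeftDenom (S + ass S) ∧ ass (S + ass S) = ass S) ∧
    -- (5) 'Q_l(R) ≅ ('S + 'a)⁻¹R
    (∀ (Q1 : Type u) (_ : Ring Q1) (f1 : R →+* Q1), IsLeftLoc S f1 →
      ∀ (Q2 : Type u) (_ : Ring Q2) (f2 : R →+* Q2), IsLeftLoc (S + ass S) f2 →
        Nonempty (Q1 ≃+* Q2)) := by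
  have hS_eq : S = lReg R ∩ (S + ass S) :=
    (subset_lReg_inter_add_ass hden.1.1.1 hsub).antisymm
      (hmax _ (hden.lReg_inter_add_ass hsub) Set.inter_subset_left)
  refine ⟨hS_eq, ⟨⟨S, hden, hsub, rfl⟩, fun T hT hTsub => ass_mono (hmax T hT hTsub)⟩,
    ⟨⟨hden, hS_eq⟩, fun T hT hTeq hST => ?_⟩, ⟨hden.add_ass, hden.1.1.ass_add_ass⟩,
    fun Q₁ _ f₁ h₁ Q₂ _ f₂ h₂ => h₁.nonempty_ringEquiv hden (h₂.of_add_ass hden.1.1)⟩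
  exact (hmax T hT (hTeq ▸ Set.inter_subset_left)).antisymm hST

end Bavula
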